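/- Let V be a nonempty countable set and b : P(V) → [0,∞] satisfy conditions (0), (1) symmetry, (2) submodularity, (3'), and (4). If X is an optimal s-t cut and u ≠ v ∈ X, then X_{u,v} ⊆ X or X_{v,u} ⊆ X, where X_{x,y} denotes the ⊆-smallest optimal x-y cut. -/

import Mathlib

/-!
Uncrossing. Let `W` be the smallest optimal `u-v` cut and suppose `t ∉ W`. Then `W ∪ X` is an
`s-t` cut, so `b X ≤ b (W ∪ X)`, and submodularity gives `b (W ∩ X) ≤ b W` (cancelling `b X`,
which is finite by (4)); as `u ∈ X`, the set `W ∩ X` is again an optimal `u-v` cut, and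
minimality of `W` forces `W ⊆ X`. If instead `t ∈ X_{u,v}`, then by symmetry of `b` the
complement of `X_{u,v}` is an optimal `v-u` cut, so `X_{v,u}` avoids `t` and the same argument
applies with `u` and `v` exchanged.
-/

open Set Filter Topology ENNReal

noncomputable section

/-- `λ_b(u,v)`: the infimum of `b(X)` over all `u-v` cuts `X`
(sets with `u ∈ X` and `v ∉ X`). -/
def lamB {V : Type*} (b : Set V → ℝ≥0∞) (u v : V) : ℝ≥0∞ :=
  ⨅ (X : Set V) (_ : u ∈ X ∧ v ∉ X), b X

/-- `X` is an optimal `u-v` cut: a `u-v` cut with `b(X) = λ_b(u,v)`. -/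
def IsOptCut {V : Type*} (b : Set V → ℝ≥0∞) (u v : V) (X : Set V) : Prop :=
  u ∈ X ∧ v ∉ X ∧ b X = lamB b u v

section Cuts

variable {V : Type*} {b : Set V → ℝ≥0∞} {s t u v : V} {W X : Set V}

lemma lamB_le (h : u ∈ X ∧ v ∉ X) : lamB b u v ≤ b X :=
  iInf₂_le X h

lemma lamB_comm (h1 : ∀ X : Set V, b Xᶜ = b X) (u v : V) : lamB b u v = lamB b v u := by
  have key : ∀ x y : V, lamB b x y ≤ lamB b y x := fun x y =>
    le_iInf₂ fun Y hY => h1 Y ▸ lamB_le ⟨hY.2, notMem_compl_iff.mpr hY.1⟩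
  exact le_antisymm (key u v) (key v u)

lemma IsOptCut.compl (h1 : ∀ X : Set V, b Xᶜ = b X) (hX : IsOptCut b u v X) :
    IsOptCut b v u Xᶜ :=
  ⟨hX.2.1, notMem_compl_iff.mpr hX.1, by
    rw [h1, hX.2.2, lamB_comm h1]⟩

lemma IsOptCut.inter
    (h2 : ∀ X Y : Set V, b (X ∩ Y) + b (X ∪ Y) ≤ b X + b Y)
    (hW : IsOptCut b u v W) (hX : IsOptCut b s t X) (hbX : b X ≠ ⊤)
    (hu : u ∈ X) (ht : t ∉ W) : IsOptCut b u v (W ∩ X) := by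
  have hcut : u ∈ W ∩ X ∧ v ∉ W ∩ X := ⟨⟨hW.1, hu⟩, fun h => hW.2.1 h.1⟩
  have hunion : b X ≤ b (W ∪ X) :=
    hX.2.2 ▸ lamB_le ⟨Or.inr hX.1, fun h => h.elim ht hX.2.1⟩
  have hinter : b (W ∩ X) ≤ b W := by
    refine (ENNReal.add_le_add_iff_right hbX).mp ?_
    calc b (W ∩ X) + b X ≤ b (W ∩ X) + b (W ∪ X) := by gcongr
      _ ≤ b W + b X := h2 W X
  exact ⟨hcut.1, hcut.2, le_antisymm (hinter.trans hW.2.2.le) (lamB_le hcut)⟩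

lemma subset_of_isLeast_isOptCut
    (h2 : ∀ X Y : Set V, b (X ∩ Y) + b (X ∪ Y) ≤ b X + b Y)
    (hW : IsLeast {Y | IsOptCut b u v Y} W) (hX : IsOptCut b s t X) (hbX : b X ≠ ⊤)
    (hu : u ∈ X) (ht : t ∉ W) : W ⊆ X :=
  (hW.2 (hW.1.inter h2 hX hbX hu ht)).trans inter_subset_right

end Cuts

theorem smallest_optimal_cut_subset_general {V : Type*}
    (b : Set V → ℝ≥0∞)
    (h1 : ∀ X : Set V, b Xᶜ = b X)
    (h2 : ∀ X Y : Set V, b (X ∩ Y) + b (X ∪ Y) ≤ b X + b Y)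
    (h4 : ∀ u v : V, u ≠ v → lamB b u v < ⊤)
    (s t u v : V) (hst : s ≠ t) (X : Set V)
    (hX : IsOptCut b s t X) (hu : u ∈ X) (hv : v ∈ X)
    (Xuv Xvu : Set V)
    (hXuv : IsLeast {Y : Set V | IsOptCut b u v Y} Xuv)
    (hXvu : IsLeast {Y : Set V | IsOptCut b v u Y} Xvu) :
    Xuv ⊆ X ∨ Xvu ⊆ X := by
  have hbX : b X ≠ ⊤ := hX.2.2 ▸ (h4 s t hst).ne
  by_cases ht : t ∈ Xuv
  · have hXvu_compl : Xvu ⊆ Xuvᶜ := hXvu.2 (hXuv.1.compl h1)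
    exact Or.inr (subset_of_isLeast_isOptCut h2 hXvu hX hbX hv fun h => hXvu_compl h ht)
  · exact Or.inl (subset_of_isLeast_isOptCut h2 hXuv hX hbX hu ht)

/-- If `X` is an optimal `s-t` cut and `u ≠ v ∈ X`, then `X_{u,v} ⊆ X` or `X_{v,u} ⊆ X`,
where `X_{x,y}` is the `⊆`-smallest optimal `x-y` cut. -/
theorem smallest_optimal_cut_subset {V : Type*} [Countable V] [Nonempty V]
    (b : Set V → ℝ≥0∞)
    (h0 : ∀ X : Set V, b X = 0 ↔ X = ∅ ∨ X = Set.univ)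
    (h1 : ∀ X : Set V, b Xᶜ = b X)
    (h2 : ∀ X Y : Set V, b (X ∩ Y) + b (X ∪ Y) ≤ b X + b Y)
    (h3m : ∀ X : ℕ → Set V, Monotone X →
      b (⋃ n, X n) ≤ Filter.liminf (fun n => b (X n)) Filter.atTop)
    (h3a : ∀ X : ℕ → Set V, Antitone X →
      b (⋂ n, X n) ≤ Filter.liminf (fun n => b (X n)) Filter.atTop)
    (h4 : ∀ u v : V, u ≠ v → lamB b u v < ⊤)
    (s t u v : V) (hst : s ≠ t) (huv : u ≠ v) (X : Set V)
    (hX : IsOptCut b s t X) (hu : u ∈ X) (hv : v ∈ X)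
    (Xuv Xvu : Set V)
    (hXuv : IsLeast {Y : Set V | IsOptCut b u v Y} Xuv)
    (hXvu : IsLeast {Y : Set V | IsOptCut b v u Y} Xvu) :
    Xuv ⊆ X ∨ Xvu ⊆ X :=
  smallest_optimal_cut_subset_general b h1 h2 h4 s t u v hst X hX hu hv Xuv Xvu hXuv hXvu
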